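/- Let 𝒮_s, 𝒮_t ⊆ 𝒫 be disjoint, and define b(𝒮_s, 𝒮_t) := Σ_{P' ∈ 𝒫'} min{|U_{𝒮_s} ∩ P'|, |U_{𝒮_t} ∩ P'|}. Then for every 𝒮 ⊆ 𝒫 with 𝒮_s ⊆ 𝒮 and 𝒮 ∩ 𝒮_t = ∅, one has b(𝒮_s, 𝒮_t) ≤ φ_{𝒫'}(𝒮). -/

import Mathlib

open Finset symmDiff

variable {V : Type*}

/-- `𝒜` is a partition of the finite set `V`: parts are nonempty, pairwise disjoint,
and their union is all of `V`. -/
def IsPartition [DecidableEq V] [Fintype V] (𝒜 : Finset (Finset V)) : Prop :=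
  (∀ P ∈ 𝒜, P.Nonempty) ∧
  (∀ P ∈ 𝒜, ∀ Q ∈ 𝒜, P ≠ Q → Disjoint P Q) ∧
  𝒜.biUnion id = Finset.univ

/-- `φ(𝒮, 𝒮') = |U_𝒮 △ U_𝒮'|`. -/
def phi [DecidableEq V] (𝒮 𝒮' : Finset (Finset V)) : ℕ :=
  ((𝒮.biUnion id) ∆ (𝒮'.biUnion id)).card

/-- `φ_{𝒫'}(𝒮) = min_{𝒮' ⊆ 𝒫'} φ(𝒮, 𝒮')` (here `ℬ` plays the role of `𝒫'`). -/
def phiMin [DecidableEq V] (ℬ : Finset (Finset V)) (𝒮 : Finset (Finset V)) : ℕ :=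
  ℬ.powerset.inf' (Finset.powerset_nonempty ℬ) (fun 𝒮' => phi 𝒮 𝒮')

/-! Fix `𝒮' ⊆ 𝒫'` and put `D = U_𝒮 △ U_𝒮'`. Each block `P' ∈ 𝒫'` lies either inside `U_𝒮'` or
outside it. In the first case `U_{𝒮_t} ∩ P' ⊆ D` because `U_{𝒮_t}` misses `U_𝒮`; in the second
`U_{𝒮_s} ∩ P' ⊆ D` because `U_{𝒮_s} ⊆ U_𝒮`. So each summand of `b(𝒮_s, 𝒮_t)` is at most `|D ∩ P'|`,
and these add up to at most `|D|` since the blocks are disjoint. -/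

theorem IsPartition.pairwiseDisjoint [DecidableEq V] [Fintype V] {𝒜 : Finset (Finset V)}
    (h𝒜 : IsPartition 𝒜) : (𝒜 : Set (Finset V)).PairwiseDisjoint id :=
  fun P hP Q hQ => h𝒜.2.1 P hP Q hQ

namespace Finset

variable [DecidableEq V]

theorem disjoint_biUnion_id_of_pairwiseDisjoint {𝒜 𝒮 𝒯 : Finset (Finset V)}
    (h𝒜 : (𝒜 : Set (Finset V)).PairwiseDisjoint id) (h𝒮 : 𝒮 ⊆ 𝒜) (h𝒯 : 𝒯 ⊆ 𝒜)
    (h : Disjoint 𝒮 𝒯) : Disjoint (𝒮.biUnion id) (𝒯.biUnion id) := by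
  refine (disjoint_biUnion_left _ _ _).mpr fun P hP => ?_
  refine (disjoint_biUnion_right _ _ _).mpr fun Q hQ => ?_
  exact h𝒜 (h𝒮 hP) (h𝒯 hQ) fun hPQ => disjoint_left.mp h hP (hPQ ▸ hQ)

theorem subset_or_disjoint_biUnion_id_of_pairwiseDisjoint {ℬ 𝒮 : Finset (Finset V)}
    (hℬ : (ℬ : Set (Finset V)).PairwiseDisjoint id) (h𝒮 : 𝒮 ⊆ ℬ) {P : Finset V} (hP : P ∈ ℬ) :
    P ⊆ 𝒮.biUnion id ∨ Disjoint P (𝒮.biUnion id) := by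
  by_cases hP𝒮 : P ∈ 𝒮
  · exact .inl (subset_biUnion_of_mem id hP𝒮)
  · refine .inr (disjoint_biUnion_right _ _ _ |>.mpr fun Q hQ => ?_)
    exact hℬ hP (h𝒮 hQ) fun hPQ => hP𝒮 (hPQ ▸ hQ)

theorem min_card_inter_le_card_symmDiff_inter {X Y S T P : Finset V} (hX : X ⊆ S)
    (hY : Disjoint Y S) (hP : P ⊆ T ∨ Disjoint P T) :
    min #(X ∩ P) #(Y ∩ P) ≤ #((S ∆ T) ∩ P) := by
  rcases hP with hPT | hPT
  · refine (min_le_right _ _).trans (card_le_card fun x hx => ?_)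
    obtain ⟨hxY, hxP⟩ := mem_inter.mp hx
    exact mem_inter.mpr ⟨mem_symmDiff.mpr (.inr ⟨hPT hxP, disjoint_left.mp hY hxY⟩), hxP⟩
  · refine (min_le_left _ _).trans (card_le_card fun x hx => ?_)
    obtain ⟨hxX, hxP⟩ := mem_inter.mp hx
    exact mem_inter.mpr ⟨mem_symmDiff.mpr (.inl ⟨hX hxX, disjoint_left.mp hPT hxP⟩), hxP⟩

theorem sum_card_inter_le_card_of_pairwiseDisjoint {ℬ : Finset (Finset V)}
    (hℬ : (ℬ : Set (Finset V)).PairwiseDisjoint id) (D : Finset V) :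
    ∑ P ∈ ℬ, #(D ∩ P) ≤ #D :=
  calc ∑ P ∈ ℬ, #(D ∩ P) = #(ℬ.biUnion (D ∩ ·)) :=
        (card_biUnion (hℬ.mono_on fun _ _ => inter_subset_right)).symm
    _ ≤ #D := card_le_card (biUnion_subset.mpr fun _ _ => inter_subset_left)

end Finset

theorem stmt7_general [DecidableEq V] [Fintype V] (𝒜 ℬ : Finset (Finset V))
    (hA : IsPartition 𝒜) (hB : IsPartition ℬ)
    (𝒮s 𝒮t : Finset (Finset V)) (hSt : 𝒮t ⊆ 𝒜)
    (𝒮 : Finset (Finset V)) (hS : 𝒮 ⊆ 𝒜) (hsub : 𝒮s ⊆ 𝒮) (hST : 𝒮 ∩ 𝒮t = ∅) :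
    ∑ P' ∈ ℬ, min ((𝒮s.biUnion id ∩ P').card) ((𝒮t.biUnion id ∩ P').card) ≤
      phiMin ℬ 𝒮 := by
  have hUt : Disjoint (𝒮t.biUnion id) (𝒮.biUnion id) :=
    disjoint_biUnion_id_of_pairwiseDisjoint hA.pairwiseDisjoint hSt hS
      (disjoint_iff_inter_eq_empty.mpr (inter_comm 𝒮t 𝒮 ▸ hST))
  refine le_inf' _ _ fun 𝒮' h𝒮' => ?_
  calc ∑ P' ∈ ℬ, min #(𝒮s.biUnion id ∩ P') #(𝒮t.biUnion id ∩ P')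
      ≤ ∑ P' ∈ ℬ, #((𝒮.biUnion id ∆ 𝒮'.biUnion id) ∩ P') :=
        sum_le_sum fun P' hP' => min_card_inter_le_card_symmDiff_inter
          (biUnion_subset_biUnion_of_subset_left id hsub) hUt
          (subset_or_disjoint_biUnion_id_of_pairwiseDisjoint hB.pairwiseDisjoint
            (mem_powerset.mp h𝒮') hP')
    _ ≤ phi 𝒮 𝒮' := sum_card_inter_le_card_of_pairwiseDisjoint hB.pairwiseDisjoint _

/-- for disjoint `𝒮_s, 𝒮_t ⊆ 𝒫`, the bound
`b(𝒮_s, 𝒮_t) = Σ_{P' ∈ 𝒫'} min{|U_{𝒮_s} ∩ P'|, |U_{𝒮_t} ∩ P'|}` satisfies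
`b(𝒮_s, 𝒮_t) ≤ φ_{𝒫'}(𝒮)` for every `𝒮 ⊆ 𝒫` with `𝒮_s ⊆ 𝒮` and `𝒮 ∩ 𝒮_t = ∅`
(here `𝒜` plays the role of `𝒫` and `ℬ` the role of `𝒫'`). -/
theorem stmt7 [DecidableEq V] [Fintype V] (𝒜 ℬ : Finset (Finset V))
    (hA : IsPartition 𝒜) (hB : IsPartition ℬ)
    (𝒮s 𝒮t : Finset (Finset V)) (hSs : 𝒮s ⊆ 𝒜) (hSt : 𝒮t ⊆ 𝒜)
    (hdisj : 𝒮s ∩ 𝒮t = ∅)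
    (𝒮 : Finset (Finset V)) (hS : 𝒮 ⊆ 𝒜) (hsub : 𝒮s ⊆ 𝒮) (hST : 𝒮 ∩ 𝒮t = ∅) :
    ∑ P' ∈ ℬ, min ((𝒮s.biUnion id ∩ P').card) ((𝒮t.biUnion id ∩ P').card) ≤
      phiMin ℬ 𝒮 :=
  stmt7_general 𝒜 ℬ hA hB 𝒮s 𝒮t hSt 𝒮 hS hsub hST
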